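/- arXiv:0706.0248 — 2 statements merged into one kernel-verified Lean document; each statement's English description precedes it below -/
import Mathlib

section
/- Let T be a finite semigroup, π a set of primes, and suppose for every non-π'-free L-class L of S = CP_π(T) we fix an H-class H_L and an element g_L of the lifted Schützenberger group Γ̃_R(H_L) of prime power order p^n (p ∈ π') representing an element of prime order p in Γ_R(H_L). Define m_s = I for π'-free s and m_s = g_{L_s}^{ω+*} otherwise, and B(s) = s·m_s. Then B is a preblowup operator: B fixes π'-free elements, B(s) <_H s for non-π'-free s, s ⊆ B(s), and m_s depends only on the L-class of s. -/
open Pointwise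

/-- Multiplication of an element of a semigroup `M` by an element of `M¹ = M` with an
adjoined identity (modelled as `Option M`, `none` being the identity `I`). -/
def hmul {M : Type*} [Mul M] (h : M) : Option M → M := fun s => s.elim h (fun u => h * u)

/-- Multiplication in `M¹` (modelled as `Option M`). -/
def omul {M : Type*} [Mul M] : Option M → Option M → Option M
  | none, t => t
  | some a, none => some a
  | some a, some b => some (a * b)

/-- `mpow a n = aⁿ` for `n ≥ 1` (with the junk value `mpow a 0 = a`). -/
def mpow {M : Type*} [Mul M] (a : M) : ℕ → M
  | 0 => a
  | 1 => a
  | n+2 => mpow a (n+1) * a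

/-- Green's preorder `a ≤_L b` iff `a ∈ M¹ b`. -/
def leL {M : Type*} [Mul M] (a b : M) : Prop := a = b ∨ ∃ u, a = u * b
/-- Green's preorder `a ≤_R b` iff `a ∈ b M¹`. -/
def leR {M : Type*} [Mul M] (a b : M) : Prop := a = b ∨ ∃ u, a = b * u
/-- Green's `L`-equivalence. -/
def eqL {M : Type*} [Mul M] (a b : M) : Prop := leL a b ∧ leL b a
/-- Green's `R`-equivalence. -/
def eqR {M : Type*} [Mul M] (a b : M) : Prop := leR a b ∧ leR b a
/-- Green's `H`-equivalence. -/
def eqH {M : Type*} [Mul M] (a b : M) : Prop := eqL a b ∧ eqR a b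
/-- `a <_H b` : `a ≤_L b`, `a ≤_R b`, but `a` is not `H`-equivalent to `b`. -/
def ltH {M : Type*} [Mul M] (a b : M) : Prop := leL a b ∧ leR a b ∧ ¬ eqH a b

/-- The `H`-class of `a`, as a type. -/
def HclsT {M : Type*} [Mul M] (a : M) := {x : M // eqH x a}

/-- The (right) Schützenberger group of the `H`-class of `a`: the set of transformations of the
`H`-class of `a` induced by right multiplication by elements of the right stabilizer in `M¹`. -/
def gammaR {M : Type*} [Mul M] (a : M) : Set (HclsT a → HclsT a) :=
  {f | ∃ s : Option M, (∀ h : HclsT a, eqH (hmul h.1 s) a) ∧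
        ∀ h : HclsT a, (f h).1 = hmul h.1 s}

/-- An element is `π'`-free if the Schützenberger group of its (`J`-class, equivalently its)
`H`-class is a `π`-group: every prime dividing its order lies in `π`. -/
def piFree {M : Type*} [Mul M] (π : Set ℕ) (a : M) : Prop :=
  ∀ p : ℕ, p.Prime → p ∣ (gammaR a).ncard → p ∈ π

/-- Membership in `CP_π(T)`: the smallest subsemigroup of `P(T)` containing the singletons and
closed under `Z ↦ Z^{ω+*} = ⋃_{n ≥ 1} Zⁿ` whenever `Z` generates a cyclic `π'`-group
(i.e. `Z` is a group element of order `k` divisible only by primes outside `π`). -/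
inductive CPmem (π : Set ℕ) {T : Type} [Semigroup T] : Set T → Prop
  | single (t : T) : CPmem π {t}
  | mul {X Y : Set T} : CPmem π X → CPmem π Y → CPmem π (X * Y)
  | omega {Z : Set T} (k : ℕ) (hk : 0 < k) (hcyc : mpow Z (k+1) = Z)
      (hπ : ∀ p : ℕ, p.Prime → p ∣ k → p ∉ π) :
      CPmem π Z → CPmem π (⋃ n, mpow Z (n+1))

/-- The semigroup `CP_π(T)`, as a subsemigroup of `P(T)`. -/
def CPT (π : Set ℕ) (T : Type) [Semigroup T] : Type := {X : Set T // CPmem π X}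

noncomputable instance {π : Set ℕ} {T : Type} [Semigroup T] : Mul (CPT π T) :=
  ⟨fun a b => ⟨a.1 * b.1, CPmem.mul a.2 b.2⟩⟩

noncomputable instance {π : Set ℕ} {T : Type} [Semigroup T] : Semigroup (CPT π T) :=
  { (inferInstance : Mul (CPT π T)) with
    mul_assoc := fun a b c => Subtype.ext (mul_assoc a.1 b.1 c.1) }

/-- A preblowup operator on `S = CP_π(T)`: `B` fixes `π'`-free elements, strictly `H`-decreases
non-`π'`-free elements, blows elements up (`s ⊆ B(s)` as subsets of `T`), and is given by right
multiplication `B(s) = s·m_s` by multipliers `m_s ∈ S¹` constant on `L`-classes. -/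
def IsPreblowup (π : Set ℕ) (T : Type) [Semigroup T]
    (B : CPT π T → CPT π T) (m : CPT π T → Option (CPT π T)) : Prop :=
  (∀ s, piFree π s → B s = s) ∧
  (∀ s, ¬ piFree π s → ltH (B s) s) ∧
  (∀ s, s.1 ⊆ (B s).1) ∧
  (∀ s, B s = hmul s (m s)) ∧
  (∀ s s', eqL s s' → m s = m s')

/-! Right multiplication by `g = g_L` maps `H = H_L` to itself, `g^p` acts trivially on it and
`g` moves its base point `h₀`. Since `h₀ ≤_L s`, also `s · g^p = s`, so `s ⊆ s · g^{ω+*}`; and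
`s · g^{ω+*}` cannot be `L`-above `s`, as that would give `s · g = s` (because
`g^{ω+*} · g = g^{ω+*}`) and then `h₀ · g = h₀`. For `s · g^{ω+*} ≤_L s` one needs a left
multiplier in `S`: writing `h₀ g = λ h₀`, a power `μ = λ^m` with `m ≡ 1 (mod p)` generates a
cyclic `p`-group, and `μ^k h₀ = h₀ g^k` for all `k`, so `μ^{ω+*} h₀ = h₀ g^{ω+*}`. Finally,
`π'`-freeness only depends on the `L`-class by Green's lemma, so `m_s` is constant on
`L`-classes. -/

section Semigroup

variable {M : Type*} [Semigroup M]

lemma leL_iff {a b : M} : leL a b ↔ ∃ v : WithOne M, (a : WithOne M) = v * b := by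
  constructor
  · rintro (rfl | ⟨u, rfl⟩)
    exacts [⟨1, (one_mul _).symm⟩, ⟨u, rfl⟩]
  · rintro ⟨v, hv⟩
    induction v using WithOne.recOneCoe with
    | one => exact Or.inl (WithOne.coe_injective (hv.trans (one_mul _)))
    | coe u => exact Or.inr ⟨u, WithOne.coe_injective hv⟩

lemma leR_iff {a b : M} : leR a b ↔ ∃ t : WithOne M, (a : WithOne M) = b * t := by
  constructor
  · rintro (rfl | ⟨u, rfl⟩)
    exacts [⟨1, (mul_one _).symm⟩, ⟨u, rfl⟩]
  · rintro ⟨t, ht⟩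
    induction t using WithOne.recOneCoe with
    | one => exact Or.inl (WithOne.coe_injective (ht.trans (mul_one _)))
    | coe u => exact Or.inr ⟨u, WithOne.coe_injective ht⟩

lemma leL_trans {a b c : M} (hab : leL a b) (hbc : leL b c) : leL a c := by
  obtain ⟨v, hv⟩ := leL_iff.1 hab
  obtain ⟨w, hw⟩ := leL_iff.1 hbc
  exact leL_iff.2 ⟨v * w, by rw [hv, hw, mul_assoc]⟩

lemma leL_mul_right {a b : M} (h : leL a b) (c : M) : leL (a * c) (b * c) := by
  rcases h with rfl | ⟨u, rfl⟩
  exacts [Or.inl rfl, Or.inr ⟨u, mul_assoc _ _ _⟩]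

lemma eqH_refl (a : M) : eqH a a := ⟨⟨Or.inl rfl, Or.inl rfl⟩, Or.inl rfl, Or.inl rfl⟩

lemma mul_eq_self_of_leL {a b x : M} (hab : leL a b) (hb : b * x = b) : a * x = a := by
  rcases hab with rfl | ⟨u, rfl⟩
  exacts [hb, by rw [mul_assoc, hb]]

lemma coe_mpow (a : M) : ∀ {n : ℕ}, n ≠ 0 → ((mpow a n : M) : WithOne M) = (a : WithOne M) ^ n
  | 1, _ => (pow_one _).symm
  | n + 2, _ => by
    rw [pow_succ, ← coe_mpow a n.succ_ne_zero]
    rfl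

lemma mpow_succ (a : M) {n : ℕ} (hn : n ≠ 0) : mpow a (n + 1) = mpow a n * a := by
  obtain ⟨n, rfl⟩ := Nat.exists_eq_succ_of_ne_zero hn
  rfl

lemma mpow_add_of_mpow_succ_eq {a : M} {k j : ℕ} (ha : mpow a (k + 1) = a) (hj : j ≠ 0) :
    mpow a (j + k) = mpow a j := by
  obtain ⟨j, rfl⟩ := Nat.exists_eq_succ_of_ne_zero hj
  apply WithOne.coe_injective
  have ha' : (a : WithOne M) ^ (k + 1) = a := by rw [← coe_mpow a k.succ_ne_zero, ha]
  rw [coe_mpow a (by omega), coe_mpow a (by omega), show j.succ + k = j + (k + 1) by omega,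
    pow_add, ha', pow_succ]

end Semigroup

section Monoid

variable {M : Type*} [Monoid M]

lemma mul_pow_eq_self {h x : M} (hx : h * x = h) : ∀ t : ℕ, h * x ^ t = h
  | 0 => by rw [pow_zero, mul_one]
  | t + 1 => by rw [pow_succ, ← mul_assoc, mul_pow_eq_self hx t, hx]

lemma mul_pow_eq_mul_pow_of_modEq {h g : M} {N a b : ℕ} (hN : h * g ^ N = h)
    (hab : a ≡ b [MOD N]) : h * g ^ a = h * g ^ b := by
  wlog hle : a ≤ b generalizing a b
  · exact (this hab.symm (le_of_not_ge hle)).symm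
  obtain ⟨t, ht⟩ := (Nat.modEq_iff_dvd' hle).1 hab
  rw [show b = N * t + a by omega, pow_add, pow_mul, ← mul_assoc, mul_pow_eq_self hN]

lemma pow_add_mul_eq_pow {y : M} {i d : ℕ} (h : y ^ (i + d) = y ^ i) (t : ℕ) {m : ℕ}
    (hm : i ≤ m) : y ^ (m + t * d) = y ^ m := by
  have hi : ∀ t : ℕ, y ^ (i + t * d) = y ^ i := fun t => by
    induction t with
    | zero => simp
    | succ t ih => rw [add_mul, one_mul, ← add_assoc, pow_add, ih, ← pow_add, h]
  obtain ⟨e, rfl⟩ := Nat.exists_eq_add_of_le hm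
  rw [add_right_comm, pow_add, hi, pow_add]

end Monoid

section Green

variable {M : Type*} [Semigroup M]

def lmul (v : WithOne M) (x : M) : M := WithOne.recOneCoe x (· * x) v

lemma coe_lmul (v : WithOne M) (x : M) : ((lmul v x : M) : WithOne M) = v * x := by
  induction v using WithOne.recOneCoe <;> rfl

lemma lmul_mul (v : WithOne M) (x y : M) : lmul v (x * y) = lmul v x * y :=
  WithOne.coe_injective (by rw [WithOne.coe_mul, coe_lmul, coe_lmul, WithOne.coe_mul, mul_assoc])

variable {a b : M} {lam mu : WithOne M}

lemma lmul_lmul_of_leR (h₁ : (a : WithOne M) = lam * b) (h₂ : (b : WithOne M) = mu * a)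
    {x : M} (hx : leR x a) : lmul lam (lmul mu x) = x := by
  obtain ⟨t, ht⟩ := leR_iff.1 hx
  apply WithOne.coe_injective
  rw [coe_lmul, coe_lmul, ht, ← mul_assoc mu, ← h₂, ← mul_assoc, ← h₁]

lemma eqH_lmul (h₁ : (a : WithOne M) = lam * b) (h₂ : (b : WithOne M) = mu * a) {x : M}
    (hx : eqH x a) : eqH (lmul mu x) b := by
  obtain ⟨⟨hxa, hax⟩, hxa', hax'⟩ := hx
  obtain ⟨v, hv⟩ := leL_iff.1 hxa
  obtain ⟨u, hu⟩ := leL_iff.1 hax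
  obtain ⟨t, ht⟩ := leR_iff.1 hxa'
  obtain ⟨r, hr⟩ := leR_iff.1 hax'
  have hx : (x : WithOne M) = lam * lmul mu x := by
    rw [← coe_lmul, lmul_lmul_of_leR h₁ h₂ hxa']
  refine ⟨⟨leL_iff.2 ⟨mu * v * lam, ?_⟩, leL_iff.2 ⟨mu * u * lam, ?_⟩⟩,
    leR_iff.2 ⟨t, ?_⟩, leR_iff.2 ⟨r, ?_⟩⟩
  · rw [coe_lmul, hv, h₁]; simp only [mul_assoc]
  · rw [h₂, hu, hx]; simp only [mul_assoc]
  · rw [coe_lmul, ht, h₂, mul_assoc]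
  · rw [h₂, hr, coe_lmul, mul_assoc]

def greenEquiv (h₁ : (a : WithOne M) = lam * b) (h₂ : (b : WithOne M) = mu * a) :
    HclsT a ≃ HclsT b where
  toFun x := ⟨lmul mu x.1, eqH_lmul h₁ h₂ x.2⟩
  invFun y := ⟨lmul lam y.1, eqH_lmul h₂ h₁ y.2⟩
  left_inv x := Subtype.ext (lmul_lmul_of_leR h₁ h₂ x.2.2.1)
  right_inv y := Subtype.ext (lmul_lmul_of_leR h₂ h₁ y.2.2.1)

lemma arrowCongr_greenEquiv_mem_gammaR (h₁ : (a : WithOne M) = lam * b)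
    (h₂ : (b : WithOne M) = mu * a) {f : HclsT a → HclsT a} (hf : f ∈ gammaR a) :
    (greenEquiv h₁ h₂).arrowCongr (greenEquiv h₁ h₂) f ∈ gammaR b := by
  obtain ⟨t, -, hft⟩ := hf
  have key : ∀ y : HclsT b,
      ((greenEquiv h₁ h₂).arrowCongr (greenEquiv h₁ h₂) f y).1 = hmul y.1 t := by
    rintro ⟨y, hy⟩
    have happ : ((greenEquiv h₁ h₂).arrowCongr (greenEquiv h₁ h₂) f ⟨y, hy⟩).1 =
        lmul mu (f ((greenEquiv h₁ h₂).symm ⟨y, hy⟩)).1 := rfl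
    have hsymm : ((greenEquiv h₁ h₂).symm ⟨y, hy⟩).1 = lmul lam y := rfl
    rw [happ, hft, hsymm]
    cases t with
    | none => exact lmul_lmul_of_leR h₂ h₁ hy.2.1
    | some u => exact (lmul_mul mu _ u).trans (congrArg (· * u) (lmul_lmul_of_leR h₂ h₁ hy.2.1))
  exact ⟨t, fun y => key y ▸ (_ : HclsT b).2, key⟩

lemma gammaR_ncard_eq_of_eqL (h : eqL a b) : (gammaR a).ncard = (gammaR b).ncard := by
  obtain ⟨lam, h₁⟩ := leL_iff.1 h.1
  obtain ⟨mu, h₂⟩ := leL_iff.1 h.2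
  set e := greenEquiv h₁ h₂
  have himage : gammaR b = e.arrowCongr e '' gammaR a := by
    refine Set.Subset.antisymm (fun f hf => ⟨e.symm.arrowCongr e.symm f,
      arrowCongr_greenEquiv_mem_gammaR h₂ h₁ hf, by ext; simp⟩) ?_
    rintro _ ⟨f, hf, rfl⟩
    exact arrowCongr_greenEquiv_mem_gammaR h₁ h₂ hf
  rw [himage, Set.ncard_image_of_injective _ (Equiv.injective _)]

lemma piFree_iff_of_eqL {π : Set ℕ} (h : eqL a b) : piFree π a ↔ piFree π b := by
  simp only [piFree, gammaR_ncard_eq_of_eqL h]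

end Green

/-- Split the period of `x` as `p^a * d'` with `p ∤ d'` and take `m ≡ 0 [MOD d']` large. -/
theorem exists_mpow_cycle_of_prime {M : Type*} [Semigroup M] [Finite M] (x : M) {p : ℕ}
    (hp : p.Prime) : ∃ m a : ℕ, m ≠ 0 ∧ m ≡ 1 [MOD p] ∧ mpow (mpow x m) (p ^ a + 1) = mpow x m := by
  obtain ⟨i, j, hij, hx⟩ := Set.finite_univ.exists_lt_map_eq_of_forall_mem
    (f := fun n : ℕ => mpow x (n + 1)) (fun _ => Set.mem_univ _)
  have hper : (x : WithOne M) ^ (i + 1 + (j - i)) = (x : WithOne M) ^ (i + 1) := by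
    rw [← coe_mpow x (by omega), ← coe_mpow x (by omega), show i + 1 + (j - i) = j + 1 by omega]
    exact congrArg _ hx.symm
  obtain ⟨a, d', hpd', hd⟩ := Nat.exists_eq_pow_mul_and_not_dvd (by omega : j - i ≠ 0) p hp.ne_one
  have hd' : d' ≠ 0 := by rintro rfl; omega
  obtain ⟨k, hk1, hk0⟩ := Nat.chineseRemainder ((Nat.Prime.coprime_iff_not_dvd hp).2 hpd') 1 0
  obtain ⟨r, hr⟩ := Nat.modEq_zero_iff_dvd.1 hk0
  have hm : i + 1 ≤ d' * (r + (i + 1) * p) :=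
    calc i + 1 ≤ (i + 1) * p := Nat.le_mul_of_pos_right _ hp.pos
      _ ≤ r + (i + 1) * p := Nat.le_add_left _ _
      _ ≤ d' * (r + (i + 1) * p) := Nat.le_mul_of_pos_left _ (Nat.pos_of_ne_zero hd')
  refine ⟨d' * (r + (i + 1) * p), a, by omega, ?_, ?_⟩
  · rw [mul_add, ← hr]
    calc k + d' * ((i + 1) * p) ≡ 1 + 0 [MOD p] :=
          hk1.add (Nat.modEq_zero_iff_dvd.2 ⟨d' * (i + 1), by ring⟩)
      _ = 1 := rfl
  · apply WithOne.coe_injective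
    rw [coe_mpow _ (by positivity), coe_mpow _ (by omega), ← pow_mul,
      mul_add, mul_one, ← pow_add_mul_eq_pow hper (r + (i + 1) * p) hm, hd]
    ring_nf

section CP

variable {π : Set ℕ} {T : Type} [Semigroup T]

instance [Finite T] : Finite (CPT π T) := inferInstanceAs (Finite {X : Set T // CPmem π X})

lemma CPT.val_mul (x y : CPT π T) : (x * y).1 = x.1 * y.1 := rfl

lemma CPT.val_mpow (x : CPT π T) : ∀ n, (mpow x n).1 = mpow x.1 n
  | 0 => rfl
  | 1 => rfl
  | n + 2 => by
    change (mpow x (n + 1) * x).1 = mpow x.1 (n + 1) * x.1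
    rw [CPT.val_mul, CPT.val_mpow x (n + 1)]

/-- The paper's `z^{ω+*}`, for `z` generating a cyclic `p`-group with `p ∈ π'`. -/
def CPT.omegaPlus (z : CPT π T) {p : ℕ} (hp : p.Prime) (hpπ : p ∉ π) {a : ℕ}
    (hz : mpow z (p ^ a + 1) = z) : CPT π T :=
  ⟨⋃ k, (mpow z (k + 1)).1, by
    simp only [CPT.val_mpow]
    refine CPmem.omega _ (pow_pos hp.pos a) (by rw [← CPT.val_mpow, hz]) (fun q hq hqp => ?_) z.2
    rwa [(Nat.prime_dvd_prime_iff_eq hq hp).1 (hq.dvd_of_dvd_pow hqp)]⟩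

variable {z : CPT π T} {p : ℕ} {hp : p.Prime} {hpπ : p ∉ π} {a : ℕ} {hz : mpow z (p ^ a + 1) = z}

lemma CPT.mpow_subset_omegaPlus {k : ℕ} (hk : k ≠ 0) :
    (mpow z k).1 ⊆ (z.omegaPlus hp hpπ hz).1 := by
  obtain ⟨j, rfl⟩ := Nat.exists_eq_succ_of_ne_zero hk
  exact Set.subset_iUnion (fun j => (mpow z (j + 1)).1) j

lemma CPT.omegaPlus_mul_self : z.omegaPlus hp hpπ hz * z = z.omegaPlus hp hpπ hz := by
  apply Subtype.ext
  change (⋃ k, (mpow z (k + 1)).1) * z.1 = ⋃ k, (mpow z (k + 1)).1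
  simp only [Set.iUnion_mul, ← CPT.val_mul]
  refine Set.Subset.antisymm (Set.iUnion_subset fun k => ?_) (Set.iUnion_subset fun k => ?_)
  · exact Set.subset_iUnion_of_subset (k + 1) subset_rfl
  · have hpa : 0 < p ^ a := pow_pos hp.pos a
    refine Set.subset_iUnion_of_subset (k + p ^ a - 1) ?_
    rw [Nat.sub_add_cancel (by omega), ← mpow_succ _ (by omega), add_right_comm,
      mpow_add_of_mpow_succ_eq hz k.succ_ne_zero]

lemma CPT.omegaPlus_mul_eq_mul_omegaPlus {μ x : CPT π T} {b : ℕ} {hμ : mpow μ (p ^ b + 1) = μ}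
    (h : ∀ k, k ≠ 0 → mpow μ k * x = x * mpow z k) :
    μ.omegaPlus hp hpπ hμ * x = x * z.omegaPlus hp hpπ hz := by
  apply Subtype.ext
  change (⋃ k, (mpow μ (k + 1)).1) * x.1 = x.1 * ⋃ k, (mpow z (k + 1)).1
  simp only [Set.iUnion_mul, Set.mul_iUnion, ← CPT.val_mul, h _ (Nat.succ_ne_zero _)]

theorem CPT.exists_mul_eq_mul_omegaPlus [Finite T] {h₀ lam : CPT π T} (hlam : h₀ * z = lam * h₀)
    (hfix : h₀ * mpow z p = h₀) : ∃ Λ : CPT π T, Λ * h₀ = h₀ * z.omegaPlus hp hpπ hz := by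
  obtain ⟨m, b, hm, hm1, hcyc⟩ := exists_mpow_cycle_of_prime lam hp
  refine ⟨(mpow lam m).omegaPlus hp hpπ hcyc, CPT.omegaPlus_mul_eq_mul_omegaPlus fun k hk => ?_⟩
  have hsemi : SemiconjBy (h₀ : WithOne (CPT π T)) z lam := by
    rw [SemiconjBy, ← WithOne.coe_mul, hlam, WithOne.coe_mul]
  have hfix' : (h₀ : WithOne (CPT π T)) * (z : WithOne (CPT π T)) ^ p = h₀ := by
    rw [← coe_mpow z hp.ne_zero, ← WithOne.coe_mul, hfix]
  apply WithOne.coe_injective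
  rw [WithOne.coe_mul, WithOne.coe_mul, coe_mpow _ hk, coe_mpow _ hm, coe_mpow _ hk, ← pow_mul,
    ← (hsemi.pow_right (m * k)).eq,
    mul_pow_eq_mul_pow_of_modEq hfix' (by simpa using hm1.mul_right k)]

end CP

section Blowup

variable {π : Set ℕ} {T : Type} [Semigroup T] {s g h₀ : CPT π T} {p : ℕ} (hp : p.Prime)
  (hpπ : p ∉ π) {a : ℕ} (hg : mpow g (p ^ a + 1) = g)

theorem subset_mul_omegaPlus (hs : leL s h₀) (hfix : h₀ * mpow g p = h₀) :
    s.1 ⊆ (s * g.omegaPlus hp hpπ hg).1 :=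
  calc s.1 = (s * mpow g p).1 := by rw [mul_eq_self_of_leL hs hfix]
    _ ⊆ (s * g.omegaPlus hp hpπ hg).1 :=
      Set.mul_subset_mul_left (CPT.mpow_subset_omegaPlus hp.ne_zero)

theorem ltH_mul_omegaPlus [Finite T] (hh₀ : eqL h₀ s) (hstab : leL (h₀ * g) h₀)
    (hfix : h₀ * mpow g p = h₀) (hmove : h₀ * g ≠ h₀) :
    ltH (s * g.omegaPlus hp hpπ hg) s := by
  obtain ⟨lam, hlam⟩ := hstab.resolve_left hmove
  obtain ⟨Λ, hΛ⟩ := CPT.exists_mul_eq_mul_omegaPlus (hp := hp) (hpπ := hpπ) (hz := hg) hlam hfix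
  refine ⟨?_, Or.inr ⟨_, rfl⟩, fun h => hmove ?_⟩
  · exact leL_trans (leL_mul_right hh₀.2 _) (leL_trans (Or.inr ⟨Λ, hΛ.symm⟩) hh₀.1)
  · refine mul_eq_self_of_leL hh₀.1 (mul_eq_self_of_leL h.1.2 ?_)
    rw [mul_assoc, CPT.omegaPlus_mul_self]

end Blowup

theorem stmt_16_general (π : Set ℕ) (T : Type) [Semigroup T] [Fintype T]
    (g h₀ : CPT π T → CPT π T) (p nn : CPT π T → ℕ)
    (hgL : ∀ s s', ¬ piFree π s → eqL s s' → g s = g s')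
    (hh₀ : ∀ s, ¬ piFree π s → eqL (h₀ s) s)
    (hp : ∀ s, ¬ piFree π s → (p s).Prime ∧ p s ∉ π ∧ 1 ≤ nn s)
    (hgpow : ∀ s, ¬ piFree π s → mpow (g s) (p s ^ nn s + 1) = g s)
    (hstab : ∀ s, ¬ piFree π s → ∀ h, eqH h (h₀ s) → eqH (h * g s) (h₀ s))
    (hordp : ∀ s, ¬ piFree π s → ∀ h, eqH h (h₀ s) → h * mpow (g s) (p s) = h)
    (hnontriv : ∀ s, ¬ piFree π s → ∃ h, eqH h (h₀ s) ∧ h * g s ≠ h) :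
    ∃ m : CPT π T → Option (CPT π T),
      (∀ s, piFree π s → m s = none) ∧
      (∀ s, ¬ piFree π s → ∃ u : CPT π T, m s = some u ∧
        (u.1 : Set T) = ⋃ k, ((mpow (g s) (k+1)).1 : Set T)) ∧
      IsPreblowup π T (fun s => hmul s (m s)) m := by
  classical
  let U s (hs : ¬ piFree π s) : CPT π T := (g s).omegaPlus (hp s hs).1 (hp s hs).2.1 (hgpow s hs)
  have hfix s (hs : ¬ piFree π s) := hordp s hs _ (eqH_refl _)
  have hmove s (hs : ¬ piFree π s) : h₀ s * g s ≠ h₀ s := fun h =>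
    let ⟨_, hh, hne⟩ := hnontriv s hs
    hne (mul_eq_self_of_leL hh.1.1 h)
  refine ⟨fun s => if hs : piFree π s then none else some (U s hs), fun s hs => dif_pos hs,
    fun s hs => ⟨U s hs, dif_neg hs, rfl⟩, fun s hs => by simp only [dif_pos hs]; rfl,
    fun s hs => ?_, fun s => ?_, fun s => rfl, fun s s' hss' => ?_⟩
  · simp only [dif_neg hs]
    exact ltH_mul_omegaPlus _ _ _ (hh₀ s hs) (hstab s hs _ (eqH_refl _)).1.1 (hfix s hs)
      (hmove s hs)
  · by_cases hs : piFree π s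
    · simp only [dif_pos hs]; rfl
    · simp only [dif_neg hs]
      exact subset_mul_omegaPlus _ _ _ (hh₀ s hs).2 (hfix s hs)
  · by_cases hs : piFree π s
    · simp only [dif_pos hs, dif_pos ((piFree_iff_of_eqL hss').1 hs)]
    · simp only [dif_neg hs, dif_neg (mt (piFree_iff_of_eqL hss').2 hs)]
      exact congrArg some (Subtype.ext (by simp only [U, CPT.omegaPlus, hgL s s' hs hss']))

/-- Construction of the preblowup operator on `S = CP_π(T)`.  For every non-`π'`-free element
`s` (with `L`-class `L_s`), fix (constantly on `L`-classes) an `H`-class `H_{L_s}` with base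
point `h₀ s` and an element `g s` of the lifted Schützenberger group `Γ̃_R(H_{L_s})` of prime
power order `(p s)^(nn s)` with `p s ∈ π'`, representing an element of prime order `p s` of
`Γ_R(H_{L_s})` (so right multiplication by `g s` stabilizes `H_{L_s}`, `(g s)^(p s)` acts as
the identity on it, and `g s` acts nontrivially).  Then `m_s := I` for `π'`-free `s` and
`m_s := (g s)^{ω+*} = ⋃_{k ≥ 1} (g s)^k` otherwise defines a preblowup operator
`B(s) = s·m_s`. -/
theorem stmt_16 (π : Set ℕ) (T : Type) [Semigroup T] [Fintype T]
    (g h₀ : CPT π T → CPT π T) (p nn : CPT π T → ℕ)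
    (hgL : ∀ s s', ¬ piFree π s → eqL s s' → g s = g s')
    (hh₀L : ∀ s s', ¬ piFree π s → eqL s s' → h₀ s = h₀ s')
    (hh₀ : ∀ s, ¬ piFree π s → eqL (h₀ s) s)
    (hp : ∀ s, ¬ piFree π s → (p s).Prime ∧ p s ∉ π ∧ 1 ≤ nn s)
    (hgpow : ∀ s, ¬ piFree π s → mpow (g s) (p s ^ nn s + 1) = g s)
    (hstab : ∀ s, ¬ piFree π s → ∀ h, eqH h (h₀ s) → eqH (h * g s) (h₀ s))
    (hordp : ∀ s, ¬ piFree π s → ∀ h, eqH h (h₀ s) → h * mpow (g s) (p s) = h)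
    (hnontriv : ∀ s, ¬ piFree π s → ∃ h, eqH h (h₀ s) ∧ h * g s ≠ h) :
    ∃ m : CPT π T → Option (CPT π T),
      (∀ s, piFree π s → m s = none) ∧
      (∀ s, ¬ piFree π s → ∃ u : CPT π T, m s = some u ∧
        (u.1 : Set T) = ⋃ k, ((mpow (g s) (k+1)).1 : Set T)) ∧
      IsPreblowup π T (fun s => hmul s (m s)) m :=
  stmt_16_general π T g h₀ p nn hgL hh₀ hp hgpow hstab hordp hnontriv
end

section
/- Let T be a finite semigroup and suppose φ : T → N is a relational morphism to a finite semigroup N in \bar{G}_π such that for every n ∈ N, the preimage nφ^{-1} is contained in some element of CP_π(T). Then every \bar{G}_π-pointlike subset of T is contained in an element of CP_π(T); combined with Proposition 'cyclic amalgamation', PL_{\bar{G}_π}(T) = { X ⊆ T : X ⊆ Y for some Y ∈ CP_π(T) }. -/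
open Pointwise

/-- A subset `G` of a semigroup is a subgroup: a nonempty subsemigroup with an identity
and inverses. -/
def IsSubgroupSet {M : Type*} [Mul M] (G : Set M) : Prop :=
  G.Nonempty ∧ (∀ a ∈ G, ∀ b ∈ G, a * b ∈ G) ∧
    ∃ e ∈ G, (∀ g ∈ G, e * g = g ∧ g * e = g) ∧ ∀ g ∈ G, ∃ h ∈ G, g * h = e ∧ h * g = e

/-- `N` lies in the pseudovariety `Ḡ_π`: every subgroup of `N` is a `π`-group. -/
def InGbarPi (π : Set ℕ) (N : Type*) [Mul N] : Prop :=
  ∀ G : Set N, IsSubgroupSet G → ∀ p : ℕ, p.Prime → p ∣ G.ncard → p ∈ π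

/-- A relational morphism `φ : T → N`: a fully defined multiplicative relation. -/
def IsRelMorphism {T N : Type*} [Mul T] [Mul N] (φ : T → N → Prop) : Prop :=
  (∀ t, ∃ n, φ t n) ∧ ∀ t t' n n', φ t n → φ t' n' → φ (t * t') (n * n')

/-- `Z ⊆ T` is `Ḡ_π`-pointlike: for every relational morphism `φ : T → N` with `N`
a finite semigroup in `Ḡ_π`, `Z ⊆ nφ⁻¹` for some `n ∈ N`. -/
def Pointlike (π : Set ℕ) {T : Type} [Semigroup T] [Fintype T] (Z : Set T) : Prop :=
  ∀ (N : Type) [Semigroup N] [Fintype N], InGbarPi π N →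
    ∀ φ : T → N → Prop, IsRelMorphism φ → ∃ n : N, ∀ t ∈ Z, φ t n

/-! Every element of `CP_π(T)` is `Ḡ_π`-pointlike: this is clear for singletons and products.
For `Z^{ω+*}`, where `Z` is a group element of `π'`-order `k`, let `Zψ ⊆ sψ` for a relational
morphism `ψ` into `N ∈ Ḡ_π`. The powers of `s` eventually cycle with some period `p`, and the cycle
is a cyclic subgroup of `N`, so `p` is a `π`-number and hence coprime to `k`. Therefore every
progression of exponents `j + mk` meets the exponent of one fixed power `e` of `s`, and since
`Zʲ⁺¹ = Z^{j+mk+1}` all of `Z^{ω+*}` lies in `eψ⁻¹`. Conversely, a pointlike set lies in a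
preimage under the given `φ`, hence in an element of `CP_π(T)` by hypothesis. -/

open Function Set

section Iterate

variable {M : Type*} [Semigroup M]

lemma mpow_succ_eq_iterate (a : M) (n : ℕ) : mpow a (n + 1) = (· * a)^[n] a := by
  induction n with
  | zero => rfl
  | succ n ih => rw [iterate_succ_apply', ← ih]; rfl

lemma mul_iterate_mul_right (u v a : M) (n : ℕ) :
    u * (· * a)^[n] v = (· * a)^[n] (u * v) := by
  induction n with
  | zero => rfl
  | succ n ih => simp only [iterate_succ_apply', ← ih, mul_assoc]

lemma iterate_mul_iterate_mul_right (a : M) (m n : ℕ) :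
    (· * a)^[m] a * (· * a)^[n] a = (· * a)^[m + n + 1] a := by
  rw [mul_iterate_mul_right, ← iterate_succ_apply' (· * a), ← iterate_add_apply]
  congr 1
  omega

end Iterate

namespace Function

variable {α : Type*} {f : α → α} {x : α}

lemma exists_iterate_mem_periodicPts [Finite α] (f : α → α) (x : α) :
    ∃ i, f^[i] x ∈ periodicPts f := by
  obtain ⟨a, b, hab, heq⟩ := Finite.exists_ne_map_eq_of_infinite (f^[·] x)
  wlog hlt : a < b generalizing a b
  · exact this b a hab.symm heq.symm (by omega)
  refine ⟨a, mk_mem_periodicPts (n := b - a) (by omega) ?_⟩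
  change f^[b - a] (f^[a] x) = f^[a] x
  rw [← iterate_add_apply, Nat.sub_add_cancel hlt.le]
  exact heq.symm

lemma ncard_range_iterate (hx : x ∈ periodicPts f) :
    (range (f^[·] x)).ncard = minimalPeriod f x := by
  have hrange : range (f^[·] x) = (f^[·] x) '' Iio (minimalPeriod f x) := by
    refine Subset.antisymm ?_ (image_subset_range _ _)
    rintro _ ⟨n, rfl⟩
    exact ⟨n % minimalPeriod f x, Nat.mod_lt _ (minimalPeriod_pos_of_mem_periodicPts hx),
      iterate_mod_minimalPeriod_eq⟩
  rw [hrange, iterate_injOn_Iio_minimalPeriod.ncard_image, ← Finset.coe_Iio, ncard_coe_finset,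
    Nat.card_Iio]

lemma iterate_eq_of_modEq {i n p : ℕ} (hy : IsPeriodicPt f p (f^[i] x)) (hin : i ≤ n)
    (hmod : n ≡ i [MOD p]) : f^[n] x = f^[i] x := by
  obtain ⟨t, ht⟩ := (Nat.modEq_iff_dvd' hin).mp hmod.symm
  rw [← Nat.sub_add_cancel hin, iterate_add_apply, ht]
  exact (hy.mul_const t).eq

end Function

lemma Nat.exists_add_mul_modEq {k p : ℕ} (hk : 0 < k) (hp : 0 < p) (hcop : k.Coprime p)
    (j r N : ℕ) : ∃ m, N ≤ j + m * k ∧ j + m * k ≡ r [MOD p] := by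
  have : NeZero p := ⟨hp.ne'⟩
  set m₀ := (((r : ZMod p) - j) * (k : ZMod p)⁻¹).val
  refine ⟨m₀ + N * p, ?_, ?_⟩
  · have h1 : N ≤ N * p := Nat.le_mul_of_pos_right N hp
    have h2 : m₀ + N * p ≤ (m₀ + N * p) * k := Nat.le_mul_of_pos_right _ hk
    omega
  · rw [← ZMod.natCast_eq_natCast_iff]
    push_cast
    rw [ZMod.natCast_self, mul_zero, add_zero, ZMod.natCast_zmod_val, mul_assoc,
      mul_comm _ (k : ZMod p), ZMod.coe_mul_inv_eq_one k hcop]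
    ring

lemma isSubgroupSet_range {M : Type*} [Mul M] (g : ℕ → M) {c p : ℕ} (hp : 0 < p)
    (hper : ∀ n, g (n + p) = g n) (hmul : ∀ a b, g a * g b = g (a + b + c)) :
    IsSubgroupSet (range g) := by
  have hper' : ∀ n t, g (n + t * p) = g n := by
    intro n t
    induction t with
    | zero => simp
    | succ t ih => rw [Nat.succ_mul, ← add_assoc, hper, ih]
  have hle : ∀ n, n ≤ n * p := fun n => Nat.le_mul_of_pos_right n hp
  -- the index of the identity plus the twist `c` is a multiple of `p`
  set E := c * p - c
  refine ⟨range_nonempty g, ?_, g E, mem_range_self E, ?_, ?_⟩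
  · rintro _ ⟨a, rfl⟩ _ ⟨b, rfl⟩
    exact ⟨a + b + c, (hmul a b).symm⟩
  · rintro _ ⟨n, rfl⟩
    have := hle c
    constructor <;> rw [hmul, ← hper' n c] <;> congr 1 <;> omega
  · rintro _ ⟨n, rfl⟩
    have := hle (n + c)
    refine ⟨g (E + (n + c) * p - (n + c)), mem_range_self _, ?_, ?_⟩ <;>
      rw [hmul, ← hper' E (n + c)] <;> congr 1 <;> omega

namespace InGbarPi

variable {π : Set ℕ} {S : Type*} [Semigroup S] {k : ℕ}

lemma coprime_minimalPeriod (hS : InGbarPi π S) (hπk : ∀ p : ℕ, p.Prime → p ∣ k → p ∉ π)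
    {s : S} {i : ℕ} (hi : (· * s)^[i] s ∈ periodicPts (· * s)) :
    k.Coprime (minimalPeriod (· * s) ((· * s)^[i] s)) := by
  set y := (· * s)^[i] s
  have hG : IsSubgroupSet (range ((· * s)^[·] y)) := by
    refine isSubgroupSet_range _ (c := i + 1) (minimalPeriod_pos_of_mem_periodicPts hi)
      (fun n => iterate_add_minimalPeriod_eq) (fun a b => ?_)
    simp only [y, ← iterate_add_apply, iterate_mul_iterate_mul_right]
    congr 1
    omega
  refine Nat.coprime_of_dvd fun r hr hrk hrp => hπk r hr hrk (hS _ hG r hr ?_)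
  rwa [ncard_range_iterate hi]

theorem exists_iterate_add_mul_eq [Finite S] (hS : InGbarPi π S) (s : S) (hk : 0 < k)
    (hπk : ∀ p : ℕ, p.Prime → p ∣ k → p ∉ π) :
    ∃ e : S, ∀ j, ∃ m, (· * s)^[j + m * k] s = e := by
  obtain ⟨i, hi⟩ := exists_iterate_mem_periodicPts (· * s) s
  refine ⟨(· * s)^[i] s, fun j => ?_⟩
  obtain ⟨m, hle, hmod⟩ := Nat.exists_add_mul_modEq hk (minimalPeriod_pos_of_mem_periodicPts hi)
    (hS.coprime_minimalPeriod hπk hi) j i i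
  exact ⟨m, iterate_eq_of_modEq (isPeriodicPt_minimalPeriod _ _) hle hmod⟩

end InGbarPi

lemma IsRelMorphism.rel_iterate_mul_right {T N : Type*} [Semigroup T] [Semigroup N]
    {ψ : T → N → Prop} (hψ : IsRelMorphism ψ) {Z : Set T} {s : N} (hZ : ∀ t ∈ Z, ψ t s)
    (j : ℕ) : ∀ t ∈ (· * Z)^[j] Z, ψ t ((· * s)^[j] s) := by
  induction j with
  | zero => exact hZ
  | succ j ih =>
    rintro _ ht
    rw [iterate_succ_apply'] at ht ⊢
    obtain ⟨a, ha, b, hb, rfl⟩ := mem_mul.mp ht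
    exact hψ.2 _ _ _ _ (ih a ha) (hZ b hb)

namespace Pointlike

variable {π : Set ℕ} {T : Type} [Semigroup T] [Fintype T]

lemma singleton (t : T) : Pointlike π {t} := by
  intro N _ _ _ ψ hψ
  obtain ⟨n, hn⟩ := hψ.1 t
  exact ⟨n, fun u hu => (mem_singleton_iff.mp hu) ▸ hn⟩

lemma mul {X Y : Set T} (hX : Pointlike π X) (hY : Pointlike π Y) : Pointlike π (X * Y) := by
  intro N _ _ hN ψ hψ
  obtain ⟨nX, hnX⟩ := hX N hN ψ hψ
  obtain ⟨nY, hnY⟩ := hY N hN ψ hψ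
  refine ⟨nX * nY, fun t ht => ?_⟩
  obtain ⟨a, ha, b, hb, rfl⟩ := mem_mul.mp ht
  exact hψ.2 _ _ _ _ (hnX a ha) (hnY b hb)

lemma iUnion_mpow {Z : Set T} {k : ℕ} (hk : 0 < k) (hcyc : mpow Z (k + 1) = Z)
    (hπ : ∀ p : ℕ, p.Prime → p ∣ k → p ∉ π) (hZ : Pointlike π Z) :
    Pointlike π (⋃ n, mpow Z (n + 1)) := by
  intro N _ _ hN ψ hψ
  obtain ⟨s, hs⟩ := hZ N hN ψ hψ
  obtain ⟨e, he⟩ := hN.exists_iterate_add_mul_eq s hk hπ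
  have hper : IsPeriodicPt (· * Z) k Z := by
    change (· * Z)^[k] Z = Z
    rw [← mpow_succ_eq_iterate, hcyc]
  refine ⟨e, fun t ht => ?_⟩
  obtain ⟨j, hj⟩ := mem_iUnion.mp ht
  obtain ⟨m, hm⟩ := he j
  have hjm : mpow Z (j + 1) = (· * Z)^[j + m * k] Z := by
    rw [mpow_succ_eq_iterate, iterate_add_apply, (hper.const_mul m).eq]
  exact hm ▸ hψ.rel_iterate_mul_right hs _ t (hjm ▸ hj)

lemma mono {X Y : Set T} (hY : Pointlike π Y) (hXY : X ⊆ Y) : Pointlike π X := by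
  intro N _ _ hN ψ hψ
  obtain ⟨n, hn⟩ := hY N hN ψ hψ
  exact ⟨n, fun t ht => hn t (hXY ht)⟩

end Pointlike

lemma CPmem.pointlike {π : Set ℕ} {T : Type} [Semigroup T] [Fintype T] {Y : Set T}
    (hY : CPmem π Y) : Pointlike π Y := by
  induction hY with
  | single t => exact Pointlike.singleton t
  | mul _ _ hX hY => exact hX.mul hY
  | omega k hk hcyc hπ _ hZ => exact hZ.iUnion_mpow hk hcyc hπ

/-- If there is a relational morphism `φ : T → N` to a finite semigroup `N ∈ Ḡ_π` such that
every preimage `nφ⁻¹` is contained in some element of `CP_π(T)`, then every `Ḡ_π`-pointlike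
subset of `T` is contained in an element of `CP_π(T)`; combined with cyclic amalgamation,
`PL_{Ḡ_π}(T) = { X ⊆ T : X ⊆ Y for some Y ∈ CP_π(T) }`. -/
theorem stmt_17 (π : Set ℕ) (T N : Type) [Semigroup T] [Fintype T] [Semigroup N] [Fintype N]
    (hN : InGbarPi π N) (φ : T → N → Prop) (hφ : IsRelMorphism φ)
    (hcover : ∀ n : N, ∃ Y : Set T, CPmem π Y ∧ {t : T | φ t n} ⊆ Y) :
    ∀ X : Set T, Pointlike π X ↔ ∃ Y : Set T, CPmem π Y ∧ X ⊆ Y := by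
  intro X
  constructor
  · intro hX
    obtain ⟨n, hn⟩ := hX N hN φ hφ
    obtain ⟨Y, hY, hnY⟩ := hcover n
    exact ⟨Y, hY, fun t ht => hnY (hn t ht)⟩
  · rintro ⟨Y, hY, hXY⟩
    exact hY.pointlike.mono hXY
end
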